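/- arXiv:1310.2691 — 2 statements merged into one kernel-verified Lean document; each statement's English description precedes it below -/
import Mathlib

section
/- Let p be a prime with p ≡ 3 (mod 4). Then ((p-1)/2)! ≡ (-1)^{ν_p} (mod p), where ν_p is the number of quadratic non-residues x with 1 < x < p/2. -/
open Finset

theorem stmt8 (p : ℕ) (hp : p.Prime) (h4 : p % 4 = 3) :
    ((((p - 1) / 2).factorial : ℤ)) ≡
      (-1) ^ ({x : ℕ | 1 < x ∧ 2 * x < p ∧ ¬ ∃ y : ZMod p, y ^ 2 = (x : ZMod p)}.ncard)
        [ZMOD p] := by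
  classical
  haveI : Fact p.Prime := ⟨hp⟩
  have hp3 : 3 ≤ p := by omega
  set n : ℕ := (p - 1) / 2 with hn
  have hpn : p = 2 * n + 1 := by omega
  have hnodd : n % 2 = 1 := by omega
  have hIcc : ∀ m : ℕ, Icc 1 m = Ico 1 (m + 1) := fun m => by rw [Finset.Ico_add_one_right_eq_Icc]
  -- F = product of 1..n in ZMod p
  set F : ZMod p := ∏ x ∈ Icc 1 n, (x : ZMod p) with hF
  have hfact : ((n.factorial : ℕ) : ZMod p) = F := by
    rw [hF, hIcc n, ← Nat.cast_prod, Finset.prod_Ico_id_eq_factorial]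
  -- product over Ioc n (p-1) equals product of -x
  have hbij : ∏ x ∈ Ioc n (p - 1), (x : ZMod p) = ∏ x ∈ Icc 1 n, (-(x : ZMod p)) := by
    apply Finset.prod_nbij' (fun x => p - x) (fun x => p - x)
    · intro a ha; simp only [mem_Ioc] at ha; simp only [mem_Icc]; omega
    · intro a ha; simp only [mem_Icc] at ha; simp only [mem_Ioc]; omega
    · intro a ha; simp only [mem_Ioc] at ha; omega
    · intro a ha; simp only [mem_Icc] at ha; omega
    · intro a ha
      simp only [mem_Ioc] at ha
      rw [Nat.cast_sub (by omega), ZMod.natCast_self, zero_sub, neg_neg]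
  have hF2 : F * F = 1 := by
    have hw : ((p - 1).factorial : ZMod p) = -1 := ZMod.wilsons_lemma p
    have hsplit : ∏ x ∈ Icc 1 (p - 1), (x : ZMod p) =
        (∏ x ∈ Icc 1 n, (x : ZMod p)) * ∏ x ∈ Ioc n (p - 1), (x : ZMod p) := by
      rw [← Finset.prod_union]
      · congr 1
        ext a
        simp only [mem_union, mem_Icc, mem_Ioc]
        omega
      · rw [Finset.disjoint_left]
        intro a ha hb
        simp only [mem_Icc] at ha
        simp only [mem_Ioc] at hb
        omega
    have hprodfact : ∏ x ∈ Icc 1 (p - 1), (x : ZMod p) = ((p - 1).factorial : ZMod p) := by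
      rw [hIcc, ← Nat.cast_prod, Finset.prod_Ico_id_eq_factorial]
    have hnegprod : ∏ x ∈ Icc 1 n, (-(x : ZMod p)) = (-1) ^ n * F := by
      have : ∀ x ∈ Icc 1 n, (-(x : ZMod p)) = (-1) * (x : ZMod p) := by intros; ring
      rw [Finset.prod_congr rfl this, Finset.prod_mul_distrib, Finset.prod_const,
        Nat.card_Icc, Nat.add_sub_cancel, hF]
    have hneg1 : (-1 : ZMod p) ^ n = -1 := Odd.neg_one_pow ⟨n / 2, by omega⟩
    rw [hprodfact, hw, hbij, hnegprod, hneg1, ← hF] at hsplit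
    linear_combination hsplit
  have hc : F = 1 ∨ F = -1 := mul_self_eq_one_iff.mp hF2
  -- Legendre symbol computation
  have hne0 : ∀ x ∈ Icc 1 n, ((x : ℕ) : ZMod p) ≠ 0 := by
    intro x hx
    simp only [mem_Icc] at hx
    rw [Ne, ZMod.natCast_eq_zero_iff]
    intro hd
    have := Nat.le_of_dvd (by omega) hd
    omega
  have hχF : quadraticChar (ZMod p) F =
      ∏ x ∈ Icc 1 n, quadraticChar (ZMod p) ((x : ℕ) : ZMod p) := by
    rw [hF, map_prod]
  rw [← Finset.prod_filter_mul_prod_filter_not (Icc 1 n)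
      (fun x => IsSquare ((x : ℕ) : ZMod p))] at hχF
  have h1' : ∏ x ∈ (Icc 1 n).filter (fun x => IsSquare ((x : ℕ) : ZMod p)),
      quadraticChar (ZMod p) ((x : ℕ) : ZMod p) = 1 := by
    apply Finset.prod_eq_one
    intro x hx
    simp only [mem_filter] at hx
    exact (quadraticChar_one_iff_isSquare (hne0 x hx.1)).mpr hx.2
  have h2' : ∏ x ∈ (Icc 1 n).filter (fun x => ¬ IsSquare ((x : ℕ) : ZMod p)),
      quadraticChar (ZMod p) ((x : ℕ) : ZMod p) =
      (-1) ^ ((Icc 1 n).filter (fun x => ¬ IsSquare ((x : ℕ) : ZMod p))).card := by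
    rw [Finset.prod_congr rfl (fun x hx => ?_), Finset.prod_const]
    simp only [mem_filter] at hx
    exact quadraticChar_neg_one_iff_not_isSquare.mpr hx.2
  rw [h1', h2', one_mul] at hχF
  -- identify the set with the filter
  have hsetcard : {x : ℕ | 1 < x ∧ 2 * x < p ∧ ¬ ∃ y : ZMod p, y ^ 2 = (x : ZMod p)}.ncard
      = ((Icc 1 n).filter (fun x => ¬ IsSquare ((x : ℕ) : ZMod p))).card := by
    rw [← Set.ncard_coe_finset]
    congr 1
    ext x
    simp only [Set.mem_setOf_eq, Finset.coe_filter, Set.mem_setOf_eq, mem_Icc]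
    constructor
    · rintro ⟨h1, h2, h3⟩
      exact ⟨⟨by omega, by omega⟩, fun ⟨r, hr⟩ => h3 ⟨r, by rw [sq]; exact hr.symm⟩⟩
    · rintro ⟨⟨hx1, hx2⟩, hns⟩
      have hx1' : 1 < x := by
        rcases Nat.lt_or_ge x 2 with h | h
        · exfalso
          have : x = 1 := by omega
          apply hns
          rw [this]
          simp
        · omega
      exact ⟨hx1', by omega, fun ⟨y, hy⟩ => hns ⟨y, by rw [← hy, sq]⟩⟩
  rw [← ZMod.intCast_eq_intCast_iff]
  push_cast
  rw [hsetcard, hfact]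
  -- final: F = (-1)^ν in ZMod p
  have key : ((quadraticChar (ZMod p) F : ℤ) : ZMod p) = F := by
    rcases hc with h | h
    · rw [h, map_one]; norm_num
    · rw [h]
      have hns : ¬ IsSquare (-1 : ZMod p) := by
        rw [ZMod.exists_sq_eq_neg_one_iff]
        simp [h4]
      rw [quadraticChar_neg_one_iff_not_isSquare.mpr hns]
      push_cast
      ring
  rw [← key, hχF]
  push_cast
  ring
end

section
/- Let p be a prime with p ≡ 3 (mod 4) such that the number ν_p of quadratic non-residues strictly between 1 and p/2 is even. Then the congruence (p-1)(p-2)⋯(p-r) ≡ -1 (mod p) has the solution r = (p-1)/2. -/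
/-!
Write `k = (p - 1) / 2`, which is odd since `p ≡ 3 (mod 4)`. Reducing mod `p`, the product is
`(-1)^k k! = -k!`, so it suffices to show `k! ≡ 1`. Wilson's theorem splits `(p - 1)!` into `k!`
times the same product, giving `(k!)^2 ≡ 1`, so `k! ≡ ±1`. The Legendre symbol of `k!` is
`(-1)^ν_p = 1`, so `k!` is a square; as `-1` is not a square mod `p`, `k! ≡ 1`.
-/

open Finset Nat

theorem prod_Icc_natCast_sub_eq_descFactorial {R : Type*} [CommRing R] {m n : ℕ} (h : n ≤ m) :
    ∏ i ∈ Icc 1 n, ((m : R) - i) = ((m - 1).descFactorial n : R) := by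
  induction n with
  | zero => simp
  | succ n ih =>
    rw [prod_Icc_succ_top (by omega), ih (by omega), descFactorial_succ, Nat.cast_mul,
      Nat.cast_sub (by omega), mul_comm]
    push_cast [Nat.cast_sub (show 1 ≤ m by omega)]
    ring

theorem ZMod.factorial_half_sq {p : ℕ} [hp : Fact p.Prime] (hp2 : p ≠ 2) :
    (((p - 1) / 2)! : ZMod p) ^ 2 = -(-1) ^ ((p - 1) / 2) := by
  set k := (p - 1) / 2
  have hk : p - 1 - k = k := by obtain ⟨m, rfl⟩ := hp.out.odd_of_ne_two hp2; omega
  have wilson := congrArg (Nat.cast : ℕ → ZMod p)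
    (factorial_mul_descFactorial (n := p - 1) (k := k) (by omega))
  rw [Nat.cast_mul, hk, ZMod.wilsons_lemma, ZMod.cast_descFactorial (by omega)] at wilson
  have hsign : ((-1 : ZMod p) ^ k) ^ 2 = 1 := by
    rw [← pow_mul, mul_comm, pow_mul, neg_one_sq, one_pow]
  linear_combination (-1 : ZMod p) ^ k * wilson - (k ! : ZMod p) ^ 2 * hsign

theorem isSquare_prod_of_even_card_filter_not_isSquare {F ι : Type*} [Field F] [Fintype F]
    [DecidableEq F] (s : Finset ι) (f : ι → F) (h : Even #{i ∈ s | ¬IsSquare (f i)}) :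
    IsSquare (∏ i ∈ s, f i) := by
  by_cases h0 : ∃ i ∈ s, f i = 0
  · obtain ⟨i, hi, hfi⟩ := h0
    rw [prod_eq_zero hi hfi]
    exact IsSquare.zero
  push Not at h0
  have hχ : quadraticChar F (∏ i ∈ s, f i) = 1 := by
    rw [map_prod, ← prod_filter_mul_prod_filter_not s (fun i => ¬IsSquare (f i)),
      prod_congr rfl fun i hi => quadraticChar_neg_one_iff_not_isSquare.mpr (mem_filter.mp hi).2,
      prod_congr rfl fun i hi => (quadraticChar_one_iff_isSquare (h0 i (mem_filter.mp hi).1)).mpr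
        (not_not.mp (mem_filter.mp hi).2)]
    simp [h.neg_one_pow]
  exact (quadraticChar_one_iff_isSquare (prod_ne_zero_iff.mpr h0)).mp hχ

theorem eq_one_of_sq_eq_one_of_isSquare {R : Type*} [Ring R] [NoZeroDivisors R]
    (hR : ¬IsSquare (-1 : R)) {a : R} (ha : a ^ 2 = 1) (hsq : IsSquare a) : a = 1 :=
  (sq_eq_one_iff.mp ha).resolve_right fun h => hR (h ▸ hsq)

theorem ZMod.setOf_nonsquare_Ioo_one_half_eq_filter_Icc (p : ℕ) [NeZero p] :
    {x : ℕ | 1 < x ∧ 2 * x < p ∧ ¬ ∃ y : ZMod p, y ^ 2 = (x : ZMod p)} =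
      (({x ∈ Icc 1 ((p - 1) / 2) | ¬IsSquare (x : ZMod p)} : Finset ℕ) : Set ℕ) := by
  ext x
  simp only [Set.mem_ofPred_eq, coe_filter, mem_Icc, isSquare_iff_exists_sq, eq_comm]
  constructor
  · rintro ⟨h1, h2, h3⟩
    exact ⟨⟨by omega, by omega⟩, h3⟩
  · rintro ⟨⟨h1, h2⟩, h3⟩
    obtain rfl | h1 := h1.eq_or_lt
    · exact absurd ⟨1, by simp⟩ h3
    · exact ⟨h1, by omega, h3⟩

theorem stmt11 (p : ℕ) (hp : p.Prime) (h4 : p % 4 = 3)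
    (hν : Even ({x : ℕ | 1 < x ∧ 2 * x < p ∧ ¬ ∃ y : ZMod p, y ^ 2 = (x : ZMod p)}.ncard)) :
    (∏ i ∈ Finset.Icc 1 ((p - 1) / 2), ((p : ℤ) - (i : ℤ))) ≡ -1 [ZMOD p] := by
  have : Fact p.Prime := ⟨hp⟩
  set k := (p - 1) / 2
  have hk : Odd k := Nat.odd_iff.mpr (by omega)
  have hsq : (k ! : ZMod p) ^ 2 = 1 := by
    rw [ZMod.factorial_half_sq (by omega), hk.neg_one_pow, neg_neg]
  have hres : IsSquare (k ! : ZMod p) := by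
    rw [ZMod.setOf_nonsquare_Ioo_one_half_eq_filter_Icc, Set.ncard_coe_finset] at hν
    rw [← prod_Ico_id_eq_factorial, Ico_add_one_right_eq_Icc, Nat.cast_prod]
    exact isSquare_prod_of_even_card_filter_not_isSquare _ _ hν
  have hneg : ¬IsSquare (-1 : ZMod p) := by rw [ZMod.exists_sq_eq_neg_one_iff]; omega
  rw [← ZMod.intCast_eq_intCast_iff]
  push_cast
  rw [prod_Icc_natCast_sub_eq_descFactorial (by omega), ZMod.cast_descFactorial (by omega),
    hk.neg_one_pow, eq_one_of_sq_eq_one_of_isSquare hneg hsq hres, mul_one]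
end
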